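/- For every two natural numbers a, b with 3 ≤ a ≤ b, there exists a connected graph G with dim_wt(G) = a and res_wt(G) = b. -/

import Mathlib

open SimpleGraph

variable {V : Type*}

/-- `W` is a resolving set: every pair of distinct vertices is resolved by some `w ∈ W`. -/
def IsResolvingSet (G : SimpleGraph V) (W : Finset V) : Prop :=
  ∀ u v : V, u ≠ v → ∃ w ∈ W, G.dist u w ≠ G.dist v w

/-- `W` is a weak total resolving set. -/
def IsWTRSet (G : SimpleGraph V) (W : Finset V) : Prop :=
  IsResolvingSet G W ∧
    ∀ v ∈ W, ∀ u : V, u ∉ W → ∃ w ∈ W, w ≠ v ∧ G.dist u w ≠ G.dist v w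

/-- `u` and `v` are twin vertices. -/
def AreTwins (G : SimpleGraph V) (u v : V) : Prop :=
  u ≠ v ∧ G.neighborSet u \ {v} = G.neighborSet v \ {u}

/-- Metric dimension. -/
noncomputable def metricDim (G : SimpleGraph V) : ℕ :=
  sInf {k | ∃ W : Finset V, W.card = k ∧ IsResolvingSet G W}

/-- Weak total metric dimension. -/
noncomputable def wtDim (G : SimpleGraph V) : ℕ :=
  sInf {k | ∃ W : Finset V, W.card = k ∧ IsWTRSet G W}

/-- Weak total resolving number: least `r` such that every `r`-subset is a WTR-set. -/
noncomputable def resWt (G : SimpleGraph V) : ℕ :=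
  sInf {r | ∀ W : Finset V, W.card = r → IsWTRSet G W}

/-! Take the clique `K_a` with a path of `b - a` further vertices hanging from the clique vertex
`0`. The clique vertices other than `0` are pairwise twins, and a weak total resolving set must
contain every vertex that has a twin; one more vertex is needed to separate `0` from `1`, and the
whole clique suffices, so `dim_wt = a`. Since a set of fewer than `b` vertices may omit a twin,
`res_wt` is the number `b` of vertices. -/

section Twins

variable {G : SimpleGraph V} {u v w : V}

theorem AreTwins.symm (h : AreTwins G u v) : AreTwins G v u :=
  ⟨h.1.symm, h.2.symm⟩

theorem AreTwins.dist_le (hG : G.Connected) (h : AreTwins G u v) (hw : w ≠ v) :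
    G.dist u w ≤ G.dist v w := by
  obtain ⟨p, hp⟩ := hG.exists_walk_length_eq_dist v w
  match p, hp with
  | .nil, _ => exact absurd rfl hw
  | .cons (v := y) hvy q, hp =>
    rw [← hp, Walk.length_cons]
    by_cases hyu : y = u
    · subst hyu
      exact (SimpleGraph.dist_le q).trans (Nat.le_succ _)
    · have huy : y ∈ G.neighborSet u \ {v} := h.2 ▸ ⟨hvy, hyu⟩
      exact SimpleGraph.dist_le (q.cons huy.1)

theorem AreTwins.dist_eq (hG : G.Connected) (h : AreTwins G u v) (hwu : w ≠ u) (hwv : w ≠ v) :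
    G.dist u w = G.dist v w :=
  le_antisymm (h.dist_le hG hwv) (h.symm.dist_le hG hwu)

/-- Only `u` and `v` themselves can tell twins `u`, `v` apart, so a weak total resolving set cannot
contain exactly one of them, and being resolving it contains at least one. -/
theorem IsWTRSet.mem_of_areTwins (hG : G.Connected) {W : Finset V} (hW : IsWTRSet G W)
    (h : AreTwins G u v) : u ∈ W := by
  by_contra hu
  by_cases hv : v ∈ W
  · obtain ⟨w, hw, hwv, hd⟩ := hW.2 v hv u hu
    exact hd (h.dist_eq hG (ne_of_mem_of_not_mem hw hu) hwv)
  · obtain ⟨w, hw, hd⟩ := hW.1 u v h.1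
    exact hd (h.dist_eq hG (ne_of_mem_of_not_mem hw hu) (ne_of_mem_of_not_mem hw hv))

theorem isWTRSet_univ [Fintype V] (hG : G.Connected) : IsWTRSet G Finset.univ :=
  ⟨fun x y hxy => ⟨x, Finset.mem_univ x, by
      rw [dist_self]; exact (hG.pos_dist_of_ne hxy.symm).ne⟩,
    fun _ _ y hy => absurd (Finset.mem_univ y) hy⟩

theorem resWt_eq_card_of_areTwins [Fintype V] (hG : G.Connected) (h : AreTwins G u v) :
    resWt G = Fintype.card V := by
  classical
  refine IsLeast.csInf_eq ⟨fun W hW => ?_, fun r hr => ?_⟩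
  · rw [Finset.eq_univ_of_card W hW]
    exact isWTRSet_univ hG
  · by_contra! hlt
    obtain ⟨W, hWu, hW⟩ := Finset.exists_subset_card_eq (s := Finset.univ.erase u) (n := r)
      (by rw [Finset.card_erase_of_mem (Finset.mem_univ u), Finset.card_univ]; omega)
    exact Finset.notMem_erase u _ (hWu ((hr W hW).mem_of_areTwins hG h))

end Twins

section Distance

variable {G : SimpleGraph V} {f : V → V → ℕ}

theorem exists_walk_length_eq_of_descent (hself : ∀ x, f x x = 0)
    (hdesc : ∀ x y, x ≠ y → ∃ z, G.Adj x z ∧ f z y + 1 = f x y) (x y : V) :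
    ∃ p : G.Walk x y, p.length = f x y := by
  induction hn : f x y generalizing x with
  | zero =>
    obtain rfl : x = y := by
      by_contra hxy
      obtain ⟨z, -, hz⟩ := hdesc x y hxy
      omega
    exact ⟨.nil, rfl⟩
  | succ n ih =>
    have hxy : x ≠ y := by
      rintro rfl
      rw [hself] at hn
      omega
    obtain ⟨z, hxz, hz⟩ := hdesc x y hxy
    obtain ⟨p, hp⟩ := ih z (by omega)
    exact ⟨p.cons hxz, by rw [Walk.length_cons, hp]⟩

theorem le_length_of_le_succ_of_adj (hself : ∀ x, f x x = 0)
    (hstep : ∀ x z y, G.Adj x z → f x y ≤ f z y + 1) {x y : V} (p : G.Walk x y) :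
    f x y ≤ p.length := by
  induction p with
  | nil => simp [hself]
  | cons h p ih =>
    rw [Walk.length_cons]
    exact (hstep _ _ _ h).trans (by omega)

theorem dist_eq_of_descent (hself : ∀ x, f x x = 0)
    (hstep : ∀ x z y, G.Adj x z → f x y ≤ f z y + 1)
    (hdesc : ∀ x y, x ≠ y → ∃ z, G.Adj x z ∧ f z y + 1 = f x y) (x y : V) :
    G.dist x y = f x y := by
  obtain ⟨p, hp⟩ := exists_walk_length_eq_of_descent hself hdesc x y
  obtain ⟨q, hq⟩ := Reachable.exists_walk_length_eq_dist ⟨p⟩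
  exact le_antisymm (hp ▸ SimpleGraph.dist_le p)
    (hq ▸ le_length_of_le_succ_of_adj hself hstep q)

theorem connected_of_descent [Nonempty V] (hself : ∀ x, f x x = 0)
    (hdesc : ∀ x y, x ≠ y → ∃ z, G.Adj x z ∧ f z y + 1 = f x y) : G.Connected :=
  ⟨fun x y => ⟨(exists_walk_length_eq_of_descent hself hdesc x y).choose⟩⟩

end Distance

section CliquePath

/-- The distance between `u` and `v` in the graph on `{0, …, b-1}` made of a clique on
`{0, …, a-1}` and the path `0 - a - (a+1) - ⋯ - (b-1)` hanging from the clique vertex `0`. -/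
def cliquePathDist (a u v : ℕ) : ℕ :=
  if u = v then 0
  else if u < a then (if v < a then 1 else if u = 0 then v - a + 1 else v - a + 2)
  else if v < a then (if v = 0 then u - a + 1 else u - a + 2)
  else if u < v then v - u else u - v

theorem cliquePathDist_comm (a u v : ℕ) : cliquePathDist a u v = cliquePathDist a v u := by
  unfold cliquePathDist; split_ifs <;> omega

theorem cliquePathDist_self (a u : ℕ) : cliquePathDist a u u = 0 := by
  simp [cliquePathDist]

theorem cliquePathDist_le_succ {a u w : ℕ} (huw : cliquePathDist a u w = 1) (v : ℕ) :
    cliquePathDist a u v ≤ cliquePathDist a w v + 1 := by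
  unfold cliquePathDist at huw ⊢; split_ifs at huw ⊢ <;> omega

theorem exists_cliquePathDist_descent {a b u v : ℕ} (hu : u < b) (hv : v < b) (huv : u ≠ v) :
    ∃ w < b, cliquePathDist a u w = 1 ∧ cliquePathDist a w v + 1 = cliquePathDist a u v := by
  refine ⟨if u < a then (if v < a then v else if u = 0 then a else 0)
    else if v < a then (if u = a then 0 else u - 1) else if u < v then u + 1 else u - 1,
    ?_, ?_, ?_⟩
  · split_ifs <;> omega
  all_goals unfold cliquePathDist; split_ifs <;> omega

def cliquePath (a b : ℕ) : SimpleGraph (Fin b) where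
  Adj u v := u ≠ v ∧ cliquePathDist a u v = 1
  symm := ⟨fun _ _ h => ⟨h.1.symm, cliquePathDist_comm a _ _ ▸ h.2⟩⟩
  loopless := ⟨fun _ h => h.1 rfl⟩

variable {a b : ℕ}

theorem cliquePath_adj {u v : Fin b} :
    (cliquePath a b).Adj u v ↔ u ≠ v ∧ cliquePathDist a u v = 1 :=
  Iff.rfl

theorem cliquePath_descent (u v : Fin b) (huv : u ≠ v) :
    ∃ w, (cliquePath a b).Adj u w ∧ cliquePathDist a w v + 1 = cliquePathDist a u v := by
  obtain ⟨w, hwb, huw, hwv⟩ := exists_cliquePathDist_descent (a := a) u.isLt v.isLt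
    (Fin.val_ne_of_ne huv)
  refine ⟨⟨w, hwb⟩, cliquePath_adj.2 ⟨fun h => ?_, huw⟩, hwv⟩
  subst h
  simp [cliquePathDist_self] at huw

theorem cliquePath_dist (u v : Fin b) :
    (cliquePath a b).dist u v = cliquePathDist a u v :=
  dist_eq_of_descent (f := fun x y : Fin b => cliquePathDist a x y)
    (fun _ => cliquePathDist_self a _)
    (fun _ _ _ h => cliquePathDist_le_succ (cliquePath_adj.1 h).2 _) cliquePath_descent u v

theorem cliquePath_connected (hb : 0 < b) : (cliquePath a b).Connected :=
  haveI : Nonempty (Fin b) := ⟨⟨0, hb⟩⟩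
  connected_of_descent (f := fun x y : Fin b => cliquePathDist a x y)
    (fun _ => cliquePathDist_self a _) cliquePath_descent

theorem cliquePath_areTwins {u v : Fin b} (hu : 1 ≤ u.val) (hua : u.val < a) (hv : 1 ≤ v.val)
    (hva : v.val < a) (huv : u ≠ v) : AreTwins (cliquePath a b) u v := by
  refine ⟨huv, Set.ext fun x => ?_⟩
  have := Fin.val_ne_of_ne huv
  simp only [Set.mem_sdiff, mem_neighborSet, Set.mem_singleton_iff, cliquePath_adj, ne_eq,
    Fin.ext_iff, cliquePathDist]
  split_ifs <;> omega

theorem isWTRSet_cliquePath_clique (ha : 3 ≤ a) :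
    IsWTRSet (cliquePath a b) {v : Fin b | (v : ℕ) < a} := by
  refine ⟨fun u v huv => ?_, fun v hv u hu => ?_⟩
  · have := Fin.val_ne_of_ne huv
    by_cases hua : (u : ℕ) < a
    · refine ⟨u, by simpa using hua, ?_⟩
      simp only [cliquePath_dist, cliquePathDist]
      split_ifs <;> omega
    by_cases hva : (v : ℕ) < a
    · refine ⟨v, by simpa using hva, ?_⟩
      simp only [cliquePath_dist, cliquePathDist]
      split_ifs <;> omega
    · refine ⟨⟨1, by omega⟩, by simp; omega, ?_⟩
      simp only [cliquePath_dist, cliquePathDist]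
      split_ifs <;> omega
  · simp only [Finset.mem_filter, Finset.mem_univ, true_and, not_lt] at hv hu
    have hu' := u.isLt
    refine ⟨⟨if (v : ℕ) = 1 then 2 else 1, by split_ifs <;> omega⟩,
      by simp; split_ifs <;> omega, fun h => ?_, ?_⟩
    · have := congrArg Fin.val h
      simp only at this
      split_ifs at this <;> omega
    · simp only [cliquePath_dist, cliquePathDist]
      split_ifs <;> first | contradiction | omega

/-- The pairwise twins `1, …, a-1` lie in every weak total resolving set, and they do not form one
on their own: none of them other than `1` separates `0 ∉ W` from `1 ∈ W`. -/
theorem le_card_of_isWTRSet_cliquePath (ha : 3 ≤ a) (hab : a ≤ b) {W : Finset (Fin b)}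
    (hW : IsWTRSet (cliquePath a b) W) : a ≤ W.card := by
  have hG := cliquePath_connected (a := a) (b := b) (by omega)
  set S : Finset (Fin b) := ({v : Fin b | (v : ℕ) < a} : Finset (Fin b)).erase ⟨0, by omega⟩
  have mem_S : ∀ x : Fin b, x ∈ S ↔ 1 ≤ (x : ℕ) ∧ (x : ℕ) < a := fun x => by
    simp [S, Fin.ext_iff]
    omega
  have card_S : S.card = a - 1 := by
    rw [Finset.card_erase_of_mem (by simp; omega), Fin.card_filter_val_lt, min_eq_right hab]
  have hSW : S ⊆ W := fun x hx => by
    rw [mem_S] at hx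
    by_cases hx1 : (x : ℕ) = 1
    · exact hW.mem_of_areTwins hG (cliquePath_areTwins (v := ⟨2, by omega⟩) hx.1 hx.2
        (by simp) (by simp; omega) (by simp [Fin.ext_iff]; omega))
    · exact hW.mem_of_areTwins hG (cliquePath_areTwins (v := ⟨1, by omega⟩) hx.1 hx.2
        le_rfl (by simp; omega) (by simpa [Fin.ext_iff]))
  have hWS : ¬ W ⊆ S := fun h => by
    obtain ⟨w, hw, hw1, hd⟩ := hW.2 ⟨1, by omega⟩
      (hSW ((mem_S _).2 ⟨le_rfl, by simp; omega⟩)) ⟨0, by omega⟩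
      (fun h0 => by simpa using (mem_S _).1 (h h0))
    have := (mem_S w).1 (h hw)
    have : (w : ℕ) ≠ 1 := fun h1 => hw1 (Fin.ext h1)
    apply hd
    simp only [cliquePath_dist, cliquePathDist]
    split_ifs <;> omega
  have := Finset.card_lt_card ⟨hSW, hWS⟩
  omega

theorem wtDim_cliquePath (ha : 3 ≤ a) (hab : a ≤ b) : wtDim (cliquePath a b) = a := by
  refine IsLeast.csInf_eq ⟨⟨_, ?_, isWTRSet_cliquePath_clique ha⟩, ?_⟩
  · rw [Fin.card_filter_val_lt, min_eq_right hab]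
  · rintro _ ⟨W, rfl, hW⟩
    exact le_card_of_isWTRSet_cliquePath ha hab hW

end CliquePath

/-- for all `3 ≤ a ≤ b` there is a connected graph `G` with
`dim_wt(G) = a` and `res_wt(G) = b`. -/
theorem exists_graph_wtDim_resWt (a b : ℕ) (ha : 3 ≤ a) (hab : a ≤ b) :
    ∃ (V : Type) (_ : Fintype V) (G : SimpleGraph V),
      G.Connected ∧ wtDim G = a ∧ resWt G = b := by
  have hG := cliquePath_connected (a := a) (b := b) (by omega)
  have hTwins : AreTwins (cliquePath a b) ⟨1, by omega⟩ ⟨2, by omega⟩ :=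
    cliquePath_areTwins le_rfl (by simp; omega) (by simp) (by simp; omega) (by simp)
  refine ⟨Fin b, inferInstance, cliquePath a b, hG, wtDim_cliquePath ha hab, ?_⟩
  rw [resWt_eq_card_of_areTwins hG hTwins, Fintype.card_fin]
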